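/- Let x₁,…,x_n be observations, σ², δ² > 0, μ ∈ ℝ, and let P₁ = N(x̄, σ²/n) (posterior under uniform prior) and P₂ = N(b/a, 1/a) with a = n/σ² + 1/δ² and b = x̄ n/σ² + μ/δ² (posterior under N(μ,δ²) prior). Then σ²|x̄ − μ|/(nδ² + σ²) ≤ d_W(P₁, P₂) ≤ σ²|x̄ − μ|/(nδ² + σ²) + (√2/√π) σ³/(nδ√(nδ² + σ²)). -/

import Mathlib

/-!
Both posteriors are affine images `√v * Z + m` of one standard normal `Z`. Coupling them through
`Z`, a 1-Lipschitz `h` satisfies `|E h(Θ₂) - E h(Θ₁)| ≤ |m₂ - m₁| + |√v₂ - √v₁| * E|Z|` with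
`E|Z| = √2 / √π`, while `h = id` shows that the mean gap `|m₂ - m₁|` is attained. The rest is
algebra: the mean gap is `σ² |x̄ - μ| / (nδ² + σ²)`, and since the posterior precisions satisfy
`n/σ² ≤ a`, the gap of standard deviations is at most
`(a - n/σ²) / ((n/σ²) √a) = σ³ / (nδ √(nδ² + σ²))`.
-/

open MeasureTheory ProbabilityTheory Real Set Filter
open scoped NNReal

theorem integral_Ioi_mul_exp_neg_mul_sq {b : ℝ} (hb : 0 < b) :
    ∫ x in Ioi (0 : ℝ), x * rexp (-b * x ^ 2) = (2 * b)⁻¹ := by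
  have hderiv : ∀ x : ℝ, HasDerivAt (fun x ↦ -(2 * b)⁻¹ * rexp (-b * x ^ 2))
      (x * rexp (-b * x ^ 2)) x := fun x ↦
    (((hasDerivAt_pow 2 x).const_mul (-b)).exp.const_mul (-(2 * b)⁻¹)).congr_deriv (by field)
  have hlim :
      Tendsto (fun y : ℝ ↦ -(2 * b)⁻¹ * rexp (-b * y ^ 2)) atTop (nhds (-(2 * b)⁻¹ * 0)) :=
    (tendsto_exp_atBot.comp
      ((tendsto_pow_atTop two_ne_zero).const_mul_atTop_of_neg (neg_lt_zero.2 hb))).const_mul _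
  simpa using integral_Ioi_of_hasDerivAt_of_tendsto' (a := 0) (fun x _ ↦ hderiv x)
    (integrable_mul_exp_neg_mul_sq hb).integrableOn hlim

theorem integral_abs_mul_exp_neg_mul_sq {b : ℝ} (hb : 0 < b) :
    ∫ x : ℝ, |x| * rexp (-b * x ^ 2) = b⁻¹ := by
  have h := integral_comp_abs (f := fun x ↦ x * rexp (-b * x ^ 2))
  simp only [sq_abs] at h
  rw [h, integral_Ioi_mul_exp_neg_mul_sq hb]
  field_simp

theorem integral_abs_gaussianReal_zero_one : ∫ x, |x| ∂gaussianReal 0 1 = √2 / √π := by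
  rw [integral_gaussianReal_eq_integral_smul one_ne_zero]
  have hpdf : ∀ x : ℝ,
      gaussianPDFReal 0 1 x • |x| = (√(2 * π))⁻¹ * (|x| * rexp (-(1 / 2) * x ^ 2)) := fun x ↦ by
    simp only [gaussianPDFReal, smul_eq_mul]
    push_cast
    ring_nf
  simp only [hpdf]
  rw [integral_const_mul, integral_abs_mul_exp_neg_mul_sq (by norm_num), sqrt_mul zero_le_two]
  have h2 : √2 * √2 = 2 := mul_self_sqrt zero_le_two
  have hπ : 0 < √π := sqrt_pos.mpr pi_pos
  field_simp
  linarith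

theorem gaussianReal_eq_map_affine (m : ℝ) (v : ℝ≥0) :
    gaussianReal m v = (gaussianReal 0 1).map (fun z ↦ √v * z + m) := by
  have hscale : (gaussianReal 0 1).map (√v * ·) = gaussianReal 0 v := by
    rw [gaussianReal_map_const_mul]
    congr 1
    · ring
    · ext; simp [sq_sqrt v.coe_nonneg]
  rw [show (fun z : ℝ ↦ √v * z + m) = (· + m) ∘ (√v * ·) from rfl,
    ← Measure.map_map (measurable_add_const m) (measurable_const_mul _), hscale,
    gaussianReal_map_add_const, zero_add]

section LipschitzCoupling

variable {α E F : Type*} [MeasurableSpace α] {μ : Measure α} [IsFiniteMeasure μ]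
  [NormedAddCommGroup E] [NormedAddCommGroup F] {K : ℝ≥0} {h : E → F}

theorem LipschitzWith.integrable_comp (hh : LipschitzWith K h) {f : α → E}
    (hf : Integrable f μ) : Integrable (fun x ↦ h (f x)) μ := by
  refine ((integrable_const ‖h 0‖).add (hf.norm.const_mul K)).mono'
    (hh.continuous.comp_aestronglyMeasurable hf.1) (ae_of_all _ fun x ↦ ?_)
  have hlip := hh.norm_sub_le (f x) 0
  rw [sub_zero] at hlip
  exact (norm_le_norm_add_norm_sub' _ (h 0)).trans (add_le_add_right hlip _)

theorem LipschitzWith.norm_integral_comp_sub_le [NormedSpace ℝ F] (hh : LipschitzWith K h)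
    {f g : α → E} (hf : Integrable f μ) (hg : Integrable g μ) :
    ‖∫ x, h (f x) ∂μ - ∫ x, h (g x) ∂μ‖ ≤ K * ∫ x, ‖f x - g x‖ ∂μ := by
  rw [← integral_sub (hh.integrable_comp hf) (hh.integrable_comp hg), ← integral_const_mul]
  refine (norm_integral_le_integral_norm _).trans
    (integral_mono_of_nonneg (ae_of_all _ fun _ ↦ norm_nonneg _)
      (((hf.sub hg).norm).const_mul _) (ae_of_all _ fun x ↦ hh.norm_sub_le _ _))

end LipschitzCoupling

theorem LipschitzWith.abs_integral_gaussianReal_sub_le {K : ℝ≥0} {h : ℝ → ℝ}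
    (hh : LipschitzWith K h) (m₁ m₂ : ℝ) (v₁ v₂ : ℝ≥0) :
    |∫ θ, h θ ∂gaussianReal m₂ v₂ - ∫ θ, h θ ∂gaussianReal m₁ v₁|
      ≤ K * (|m₂ - m₁| + |√v₂ - √v₁| * (√2 / √π)) := by
  have hZ : Integrable (fun z : ℝ ↦ z) (gaussianReal 0 1) :=
    memLp_one_iff_integrable.1 (memLp_id_gaussianReal 1)
  have haffine (m s : ℝ) : Integrable (fun z ↦ s * z + m) (gaussianReal 0 1) :=
    (hZ.const_mul s).add (integrable_const m)
  rw [gaussianReal_eq_map_affine m₁, gaussianReal_eq_map_affine m₂,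
    integral_map (by fun_prop) hh.continuous.aestronglyMeasurable,
    integral_map (by fun_prop) hh.continuous.aestronglyMeasurable]
  refine (hh.norm_integral_comp_sub_le (haffine m₂ √v₂) (haffine m₁ √v₁)).trans ?_
  gcongr
  calc ∫ z, ‖√v₂ * z + m₂ - (√v₁ * z + m₁)‖ ∂gaussianReal 0 1
      ≤ ∫ z, (|m₂ - m₁| + |√v₂ - √v₁| * |z|) ∂gaussianReal 0 1 := by
        refine integral_mono ((haffine _ _).sub (haffine _ _)).norm
          ((integrable_const _).add (hZ.abs.const_mul _)) fun z ↦ ?_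
        rw [norm_eq_abs, ← abs_mul]
        exact (abs_add_le (m₂ - m₁) ((√v₂ - √v₁) * z)).trans_eq' (by ring_nf)
    _ = |m₂ - m₁| + |√v₂ - √v₁| * (√2 / √π) := by
        rw [integral_add (integrable_const _) (hZ.abs.const_mul _), integral_const_mul,
          integral_abs_gaussianReal_zero_one]
        simp

theorem gaussianReal_wasserstein_bounds {m₁ m₂ : ℝ} {v₁ v₂ : ℝ≥0} {W : ℝ}
    (hW : IsLUB {d : ℝ | ∃ h : ℝ → ℝ, LipschitzWith 1 h ∧
      d = |∫ θ, h θ ∂gaussianReal m₂ v₂ - ∫ θ, h θ ∂gaussianReal m₁ v₁|} W) :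
    |m₂ - m₁| ≤ W ∧ W ≤ |m₂ - m₁| + |√v₂ - √v₁| * (√2 / √π) := by
  refine ⟨hW.1 ⟨id, LipschitzWith.id, by simp⟩, hW.2 ?_⟩
  rintro _ ⟨h, hh, rfl⟩
  simpa using hh.abs_integral_gaussianReal_sub_le m₁ m₂ v₁ v₂

theorem Real.sqrt_sub_sqrt_le_div_sqrt {x y : ℝ} (hx : 0 < x) (hxy : x ≤ y) :
    √y - √x ≤ (y - x) / √x := by
  rw [le_div_iff₀ (sqrt_pos.2 hx)]
  nlinarith [sq_sqrt hx.le, sq_sqrt (hx.le.trans hxy), sqrt_le_sqrt hxy, sqrt_nonneg x]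

theorem abs_sqrt_one_div_sub_sqrt_one_div_le {p q : ℝ} (hp : 0 < p) (hpq : p ≤ q) :
    |√(1 / q) - √(1 / p)| ≤ (q - p) / (p * √q) := by
  have hq := hp.trans_le hpq
  rw [abs_sub_comm, abs_of_nonneg (sub_nonneg.2 (sqrt_le_sqrt (one_div_le_one_div_of_le hp hpq)))]
  refine (sqrt_sub_sqrt_le_div_sqrt (by positivity) (one_div_le_one_div_of_le hp hpq)).trans_eq ?_
  rw [sqrt_div' _ hq.le, sqrt_one]
  have := sqrt_pos.2 hq
  field_simp
  rw [sq_sqrt hq.le]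
  ring

theorem wasserstein_normal_posteriors_general
    (n : ℕ) (hn : 1 ≤ n) (σ δ μ : ℝ) (hσ : 0 < σ) (hδ : 0 < δ)
    (xbar : ℝ)
    (a b : ℝ) (ha : a = n / σ ^ 2 + 1 / δ ^ 2)
    (hb : b = xbar * n / σ ^ 2 + μ / δ ^ 2)
    (P₁ P₂ : Measure ℝ)
    (hP₁ : P₁ = gaussianReal xbar (σ ^ 2 / n).toNNReal)
    (hP₂ : P₂ = gaussianReal (b / a) (1 / a).toNNReal)
    (W : ℝ)
    (hW : IsLUB {d : ℝ | ∃ h : ℝ → ℝ, LipschitzWith 1 h ∧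
        d = |(∫ θ, h θ ∂P₂) - ∫ θ, h θ ∂P₁|} W) :
    σ ^ 2 * |xbar - μ| / (n * δ ^ 2 + σ ^ 2) ≤ W
    ∧ W ≤ σ ^ 2 * |xbar - μ| / (n * δ ^ 2 + σ ^ 2)
        + Real.sqrt 2 / Real.sqrt Real.pi
          * σ ^ 3 / (n * δ * Real.sqrt (n * δ ^ 2 + σ ^ 2)) := by
  subst hP₁ hP₂
  have hn₀ : (0 : ℝ) < n := by exact_mod_cast hn
  have hp : 0 < (n : ℝ) / σ ^ 2 := by positivity
  have hpa : (n : ℝ) / σ ^ 2 ≤ a := by rw [ha]; simp only [le_add_iff_nonneg_right]; positivity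
  have ha₀ : 0 < a := hp.trans_le hpa
  have ha_scaled : a * (σ * δ) ^ 2 = n * δ ^ 2 + σ ^ 2 := by rw [ha]; field_simp
  have hmean : |b / a - xbar| = σ ^ 2 * |xbar - μ| / (n * δ ^ 2 + σ ^ 2) := by
    have hdiff : b / a - xbar = σ ^ 2 * (μ - xbar) / (n * δ ^ 2 + σ ^ 2) := by
      rw [hb, ha]
      field_simp
      ring
    rw [hdiff, abs_div, abs_mul, abs_of_pos (by positivity : (0 : ℝ) < n * δ ^ 2 + σ ^ 2),
      abs_of_pos (by positivity : 0 < σ ^ 2), abs_sub_comm]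
  have hsd : |√(1 / a) - √(σ ^ 2 / n)| ≤ σ ^ 3 / (n * δ * √(n * δ ^ 2 + σ ^ 2)) := by
    rw [← one_div_div (n : ℝ)]
    refine (abs_sqrt_one_div_sub_sqrt_one_div_le hp hpa).trans_eq ?_
    rw [← ha_scaled, sqrt_mul ha₀.le, sqrt_sq (by positivity), ha]
    field_simp
    ring
  obtain ⟨hlower, hupper⟩ := gaussianReal_wasserstein_bounds hW
  rw [Real.coe_toNNReal _ (by positivity), Real.coe_toNNReal _ (by positivity), hmean] at hupper
  rw [hmean] at hlower
  refine ⟨hlower, hupper.trans ?_⟩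
  exact add_le_add_right ((mul_le_mul_of_nonneg_right hsd (by positivity)).trans_eq (by ring)) _

/-- Bounds on the Wasserstein distance between the normal posteriors under a
uniform prior, `N(x̄, σ²/n)`, and under a `N(μ,δ²)` prior, `N(b/a, 1/a)` with
`a = n/σ² + 1/δ²` and `b = x̄n/σ² + μ/δ²`. -/
theorem wasserstein_normal_posteriors
    (n : ℕ) (hn : 1 ≤ n) (x : Fin n → ℝ) (σ δ μ : ℝ) (hσ : 0 < σ) (hδ : 0 < δ)
    (xbar : ℝ) (hxbar : xbar = (∑ i, x i) / n)
    (a b : ℝ) (ha : a = n / σ ^ 2 + 1 / δ ^ 2)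
    (hb : b = xbar * n / σ ^ 2 + μ / δ ^ 2)
    (P₁ P₂ : Measure ℝ)
    (hP₁ : P₁ = gaussianReal xbar (σ ^ 2 / n).toNNReal)
    (hP₂ : P₂ = gaussianReal (b / a) (1 / a).toNNReal)
    (W : ℝ)
    (hW : IsLUB {d : ℝ | ∃ h : ℝ → ℝ, LipschitzWith 1 h ∧
        d = |(∫ θ, h θ ∂P₂) - ∫ θ, h θ ∂P₁|} W) :
    σ ^ 2 * |xbar - μ| / (n * δ ^ 2 + σ ^ 2) ≤ W
    ∧ W ≤ σ ^ 2 * |xbar - μ| / (n * δ ^ 2 + σ ^ 2)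
        + Real.sqrt 2 / Real.sqrt Real.pi
          * σ ^ 3 / (n * δ * Real.sqrt (n * δ ^ 2 + σ ^ 2)) :=
  wasserstein_normal_posteriors_general n hn σ δ μ hσ hδ xbar a b ha hb P₁ P₂ hP₁ hP₂ W hW
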